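/- arXiv:1905.09499 — 4 statements merged into one kernel-verified Lean document; each statement's English description precedes it below -/
import Mathlib

section
/- A univariate polynomial p(t) with real coefficients is nonnegative on all of ℝ if and only if p is a sum of two squares of polynomials. -/
open Polynomial

/-- A positive quadratic is a sum of two squares. -/
lemma quad_sos (q : Polynomial ℝ) (h2 : q.natDegree = 2) (hq : ∀ t : ℝ, 0 < q.eval t) :
    ∃ a b : Polynomial ℝ, q = a ^ 2 + b ^ 2 := by
  set A := q.coeff 2 with hA
  set B := q.coeff 1 with hB
  set Cc := q.coeff 0 with hC
  have heval : ∀ t : ℝ, q.eval t = Cc + B * t + A * t ^ 2 := by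
    intro t
    rw [eval_eq_sum_range, h2]
    simp [Finset.sum_range_succ]
    rfl
  have hq0 : q ≠ 0 := fun h => absurd (hq 0) (by simp [h])
  have hAl : A = q.leadingCoeff := by rw [leadingCoeff, h2]
  have hAne : A ≠ 0 := by rw [hAl]; exact leadingCoeff_ne_zero.mpr hq0
  have hApos : 0 < A := by
    rcases hAne.lt_or_gt with h | h
    · exfalso
      have hdeg : 0 < q.degree := by
        rw [degree_eq_natDegree hq0, h2]; norm_num
      have := q.tendsto_atBot_of_leadingCoeff_nonpos hdeg (by rw [← hAl]; exact h.le)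
      obtain ⟨t, ht⟩ := (this.eventually (Filter.eventually_lt_atBot 0)).exists
      exact absurd (hq t) (not_lt.mpr ht.le)
    · exact h
  set D := Cc - B ^ 2 / (4 * A) with hD
  have hDpos : 0 < D := by
    have := hq (-(B / (2 * A)))
    rw [heval] at this
    have h4 : (4 : ℝ) * A ≠ 0 := by positivity
    rw [hD]
    field_simp at this ⊢
    nlinarith [this]
  refine ⟨Polynomial.C (Real.sqrt A) * (X + Polynomial.C (B / (2 * A))),
    Polynomial.C (Real.sqrt D), Polynomial.funext fun t => ?_⟩
  have hsA : Real.sqrt A ^ 2 = A := Real.sq_sqrt hApos.le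
  have hsD : Real.sqrt D ^ 2 = D := Real.sq_sqrt hDpos.le
  simp only [eval_add, eval_pow, eval_mul, eval_C, eval_X, heval]
  rw [mul_pow, hsA]
  rw [hsD, hD]
  field_simp
  ring

lemma sos_aux : ∀ (n : ℕ) (p : Polynomial ℝ), p.natDegree ≤ n → (∀ t : ℝ, 0 ≤ p.eval t) →
    ∃ q₁ q₂ : Polynomial ℝ, p = q₁ ^ 2 + q₂ ^ 2 := by
  intro n
  induction n using Nat.strong_induction_on with
  | _ n ih =>
  intro p hdeg hpos
  by_cases hp0 : p = 0
  · exact ⟨0, 0, by simp [hp0]⟩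
  by_cases hd : p.natDegree = 0
  · obtain ⟨c, rfl⟩ := natDegree_eq_zero.mp hd
    have hc : 0 ≤ c := by simpa using hpos 0
    exact ⟨Polynomial.C (Real.sqrt c), 0, by
      rw [← C_pow, Real.sq_sqrt hc]; ring⟩
  by_cases hroot : ∃ r : ℝ, p.eval r = 0
  · obtain ⟨r, hr⟩ := hroot
    -- (X - C r)^2 divides p
    obtain ⟨h, hh⟩ := dvd_iff_isRoot.mpr hr
    have hderiv : p.derivative.eval r = 0 := by
      have hmin : IsLocalMin (fun t => p.eval t) r :=
        Filter.Eventually.of_forall fun t => by simpa [hr] using hpos t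
      have := hmin.deriv_eq_zero
      rwa [Polynomial.deriv] at this
    have hhr : h.eval r = 0 := by
      have : p.derivative = h + (X - Polynomial.C r) * h.derivative := by
        rw [hh, derivative_mul]; simp
      rw [this] at hderiv
      simpa using hderiv
    obtain ⟨g, hg⟩ := dvd_iff_isRoot.mpr hhr
    have hpg : p = (X - Polynomial.C r) ^ 2 * g := by rw [hh, hg]; ring
    have hgne : g ≠ 0 := by rintro rfl; simp at hpg; exact hp0 (by simpa using hpg)
    have hgpos : ∀ t : ℝ, 0 ≤ g.eval t := by
      have hne : ∀ t : ℝ, t ≠ r → 0 ≤ g.eval t := by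
        intro t ht
        have h1 : 0 ≤ (t - r) ^ 2 * g.eval t := by
          have := hpos t; rwa [hpg, eval_mul, eval_pow, eval_sub, eval_X, eval_C] at this
        have h2 : 0 < (t - r) ^ 2 := by
          have : t - r ≠ 0 := sub_ne_zero.mpr ht
          positivity
        nlinarith
      intro t
      rcases eq_or_ne t r with rfl | ht
      · have hc : Filter.Tendsto (fun s => g.eval s) (nhdsWithin t {t}ᶜ) (nhds (g.eval t)) :=
          (g.continuousAt).tendsto.mono_left nhdsWithin_le_nhds
        refine ge_of_tendsto hc ?_
        filter_upwards [self_mem_nhdsWithin] with s hs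
        exact hne s hs
      · exact hne t ht
    have hdeg2 : p.natDegree = 2 + g.natDegree := by
      rw [hpg, natDegree_mul (pow_ne_zero 2 (X_sub_C_ne_zero r)) hgne]
      simp [natDegree_pow]
    have hlt : g.natDegree < n := by omega
    obtain ⟨a, b, hab⟩ := ih g.natDegree hlt g le_rfl hgpos
    exact ⟨(X - Polynomial.C r) * a, (X - Polynomial.C r) * b, by rw [hpg, hab]; ring⟩
  · push_neg at hroot
    have hppos : ∀ t : ℝ, 0 < p.eval t := fun t => (hpos t).lt_of_ne' (hroot t)
    obtain ⟨q, hqirr, hqdvd⟩ := WfDvdMonoid.exists_irreducible_factor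
      (not_isUnit_of_natDegree_pos p (Nat.pos_of_ne_zero hd)) hp0
    have hqnoroot : ∀ t : ℝ, q.eval t ≠ 0 := by
      intro t ht
      obtain ⟨g, hg⟩ := hqdvd
      exact hroot t (by rw [hg, eval_mul, ht, zero_mul])
    have hqdeg : q.natDegree = 2 := by
      have h1 : 0 < q.natDegree := hqirr.natDegree_pos
      have h2 : q.natDegree ≤ 2 := hqirr.natDegree_le_two
      interval_cases hqd : q.natDegree
      · exfalso
        obtain ⟨x, hx⟩ := exists_root_of_degree_eq_one
          (degree_eq_iff_natDegree_eq (fun h => by simp [h] at hqd)|>.mpr hqd)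
        exact hqnoroot x hx
      · rfl
    -- q has constant sign
    have hq0 : q ≠ 0 := fun h => hqnoroot 0 (by simp [h])
    have hsign : (∀ t : ℝ, 0 < q.eval t) ∨ (∀ t : ℝ, q.eval t < 0) := by
      rcases (hqnoroot 0).lt_or_gt with h0 | h0
      · right
        intro t
        by_contra hles
        push_neg at hles
        have := intermediate_value_uIcc (a := 0) (b := t)
          (f := fun s => q.eval s) (q.continuousOn)
        have h0m : (0 : ℝ) ∈ Set.uIcc (q.eval 0) (q.eval t) :=
          Set.mem_uIcc.mpr (Or.inl ⟨h0.le, hles⟩)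
        obtain ⟨x, _, hx⟩ := this h0m
        exact hqnoroot x hx
      · left
        intro t
        by_contra hles
        push_neg at hles
        have := intermediate_value_uIcc (a := t) (b := 0)
          (f := fun s => q.eval s) (q.continuousOn)
        have h0m : (0 : ℝ) ∈ Set.uIcc (q.eval t) (q.eval 0) :=
          Set.mem_uIcc.mpr (Or.inl ⟨hles, h0.le⟩)
        obtain ⟨x, _, hx⟩ := this h0m
        exact hqnoroot x hx
    obtain ⟨g, hg⟩ := hqdvd
    -- normalize sign: q' > 0 everywhere, p = q' * g'
    obtain ⟨q', g', hq'pos, hpq'⟩ :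
        ∃ q' g' : Polynomial ℝ, (∀ t : ℝ, 0 < q'.eval t) ∧
          p = q' * g' ∧ q'.natDegree = 2 := by
      rcases hsign with hs | hs
      · exact ⟨q, g, hs, hg, hqdeg⟩
      · exact ⟨-q, -g, fun t => by simpa using hs t,
          by rw [hg]; ring, by simpa using hqdeg⟩
    obtain ⟨hpq', hq'deg⟩ := hpq'
    have hg'pos : ∀ t : ℝ, 0 ≤ g'.eval t := by
      intro t
      have h1 := hpos t
      rw [hpq', eval_mul] at h1
      nlinarith [hq'pos t]
    have hg'ne : g' ≠ 0 := by rintro rfl; rw [mul_zero] at hpq'; exact hp0 hpq'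
    have hq'ne : q' ≠ 0 := fun h => absurd (hq'pos 0) (by simp [h])
    have hdeg2 : p.natDegree = 2 + g'.natDegree := by
      rw [hpq', natDegree_mul hq'ne hg'ne, hq'deg]
    have hlt : g'.natDegree < n := by omega
    obtain ⟨a, b, hab⟩ := ih g'.natDegree hlt g' le_rfl hg'pos
    obtain ⟨c, d, hcd⟩ := quad_sos q' hq'deg hq'pos
    exact ⟨c * a - d * b, c * b + d * a, by rw [hpq', hab, hcd]; ring⟩

theorem univariate_nonneg_iff_sum_two_squares (p : Polynomial ℝ) :
    (∀ t : ℝ, 0 ≤ p.eval t) ↔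
      ∃ q₁ q₂ : Polynomial ℝ, p = q₁ ^ 2 + q₂ ^ 2 := by
  constructor
  · exact fun h => sos_aux p.natDegree p le_rfl h
  · rintro ⟨q₁, q₂, rfl⟩ t
    simp only [eval_add, eval_pow]
    positivity
end

section
/- A univariate polynomial p(t) of even degree is nonnegative on the interval [0, T] (T > 0) if and only if p(t) = v(t) + t·(T − t)·w(t) for some sum-of-squares polynomials v and w. -/
/-- A univariate real polynomial is a sum of squares of polynomials. -/
def IsSOS (p : Polynomial ℝ) : Prop :=
  ∃ (k : ℕ) (q : Fin k → Polynomial ℝ), p = ∑ i, q i ^ 2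

open Polynomial

namespace SOSAux

lemma isSOS_iff_isSumSq (p : ℝ[X]) : IsSOS p ↔ IsSumSq p := by
  constructor
  · rintro ⟨k, q, rfl⟩
    have h : ∑ i, q i ^ 2 = ∑ i : Fin k, q i * q i := by simp [sq]
    rw [h]
    exact IsSumSq.sum_mul_self Finset.univ q
  · intro h
    induction h with
    | zero => exact ⟨0, ![], by simp⟩
    | @sq_add a S pS ih =>
      obtain ⟨k, q, rfl⟩ := ih
      exact ⟨k + 1, Fin.cons a q, by simp [Fin.sum_univ_succ, sq]⟩

lemma isSumSq_sq_mul {R : Type*} [CommRing R] {a b : R} (hb : IsSumSq b) :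
    IsSumSq (a * a * b) := by
  induction hb with
  | zero => simpa using IsSumSq.zero
  | @sq_add y S pS ih =>
    have h : a * a * (y * y + S) = (a * y) * (a * y) + a * a * S := by ring
    rw [h]
    exact IsSumSq.sq_add _ ih

lemma isSumSq_mul {R : Type*} [CommRing R] {a b : R} (ha : IsSumSq a) (hb : IsSumSq b) :
    IsSumSq (a * b) := by
  induction ha with
  | zero => simpa using IsSumSq.zero
  | @sq_add x S pS ih =>
    have h : (x * x + S) * b = x * x * b + S * b := by ring
    rw [h]
    exact (isSumSq_sq_mul hb).add ih

lemma sos_zero : IsSOS 0 := ⟨0, ![], by simp⟩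

lemma sos_sq (p : ℝ[X]) : IsSOS (p ^ 2) := ⟨1, ![p], by simp⟩

lemma sos_add {p q : ℝ[X]} (hp : IsSOS p) (hq : IsSOS q) : IsSOS (p + q) := by
  rw [isSOS_iff_isSumSq] at *
  exact hp.add hq

lemma sos_mul {p q : ℝ[X]} (hp : IsSOS p) (hq : IsSOS q) : IsSOS (p * q) := by
  rw [isSOS_iff_isSumSq] at *
  exact isSumSq_mul hp hq

lemma sos_const {c : ℝ} (hc : 0 ≤ c) : IsSOS (C c) := by
  refine ⟨1, ![C (Real.sqrt c)], ?_⟩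
  simp [← C_pow, Real.sq_sqrt hc]

lemma sos_eval_nonneg {p : ℝ[X]} (hp : IsSOS p) (t : ℝ) : 0 ≤ p.eval t := by
  obtain ⟨k, q, rfl⟩ := hp
  simp only [eval_finset_sum, eval_pow]
  exact Finset.sum_nonneg fun i _ => sq_nonneg _

/-- Membership in the quadratic module generated by `X (T - X)`. -/
def InM (T : ℝ) (p : ℝ[X]) : Prop :=
  ∃ v w : ℝ[X], IsSOS v ∧ IsSOS w ∧ p = v + X * (C T - X) * w

lemma sos_inM {T : ℝ} {p : ℝ[X]} (hp : IsSOS p) : InM T p :=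
  ⟨p, 0, hp, sos_zero, by ring⟩

lemma InM.add {T : ℝ} {p q : ℝ[X]} (hp : InM T p) (hq : InM T q) : InM T (p + q) := by
  obtain ⟨v1, w1, hv1, hw1, rfl⟩ := hp
  obtain ⟨v2, w2, hv2, hw2, rfl⟩ := hq
  exact ⟨v1 + v2, w1 + w2, sos_add hv1 hv2, sos_add hw1 hw2, by ring⟩

lemma InM.mul {T : ℝ} {p q : ℝ[X]} (hp : InM T p) (hq : InM T q) : InM T (p * q) := by
  obtain ⟨v1, w1, hv1, hw1, rfl⟩ := hp
  obtain ⟨v2, w2, hv2, hw2, rfl⟩ := hq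
  refine ⟨v1 * v2 + (X * (C T - X)) ^ 2 * (w1 * w2), v1 * w2 + w1 * v2, ?_, ?_, by ring⟩
  · exact sos_add (sos_mul hv1 hv2) (sos_mul (sos_sq _) (sos_mul hw1 hw2))
  · exact sos_add (sos_mul hv1 hw2) (sos_mul hw1 hv2)

lemma inM_X {T : ℝ} (hT : 0 < T) : InM T (X : ℝ[X]) := by
  refine ⟨C T⁻¹ * X ^ 2, C T⁻¹, sos_mul (sos_const (by positivity)) (sos_sq X),
    sos_const (by positivity), ?_⟩
  have h : (C T⁻¹ : ℝ[X]) * C T = 1 := by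
    rw [← C_mul, inv_mul_cancel₀ hT.ne', C_1]
  calc (X : ℝ[X]) = (C T⁻¹ * C T) * X := by rw [h, one_mul]
    _ = C T⁻¹ * X ^ 2 + X * (C T - X) * C T⁻¹ := by ring

lemma inM_TsubX {T : ℝ} (hT : 0 < T) : InM T (C T - X : ℝ[X]) := by
  refine ⟨C T⁻¹ * (C T - X) ^ 2, C T⁻¹, sos_mul (sos_const (by positivity)) (sos_sq _),
    sos_const (by positivity), ?_⟩
  have h : (C T⁻¹ : ℝ[X]) * C T = 1 := by
    rw [← C_mul, inv_mul_cancel₀ hT.ne', C_1]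
  calc (C T - X : ℝ[X]) = (C T⁻¹ * C T) * (C T - X) := by rw [h, one_mul]
    _ = C T⁻¹ * (C T - X) ^ 2 + X * (C T - X) * C T⁻¹ := by ring

lemma eval_nonneg_of_closure (h : ℝ[X]) {s : Set ℝ} (hs : ∀ x ∈ s, 0 ≤ h.eval x)
    {x : ℝ} (hx : x ∈ closure s) : 0 ≤ h.eval x := by
  have hsub : s ⊆ (fun y => h.eval y) ⁻¹' Set.Ici 0 := fun y hy => hs y hy
  exact closure_minimal hsub (isClosed_Ici.preimage h.continuous) hx

lemma main (T : ℝ) (hT : 0 < T) :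
    ∀ n (p : ℝ[X]), p.natDegree ≤ n → (∀ t ∈ Set.Icc (0 : ℝ) T, 0 ≤ p.eval t) → InM T p := by
  intro n
  induction n using Nat.strong_induction_on with
  | _ n ih =>
  intro p hdeg hp
  by_cases hp0 : p = 0
  · subst hp0; exact sos_inM sos_zero
  by_cases hd0 : p.natDegree = 0
  · obtain ⟨c, rfl⟩ := natDegree_eq_zero.mp hd0
    have hc : 0 ≤ c := by simpa using hp 0 ⟨le_refl 0, hT.le⟩
    exact sos_inM (sos_const hc)
  have hd1 : 1 ≤ p.natDegree := Nat.one_le_iff_ne_zero.mpr hd0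
  have hn1 : 1 ≤ n := le_trans hd1 hdeg
  obtain ⟨z, hz⟩ := IsAlgClosed.exists_aeval_eq_zero ℂ p
    (fun h => hd0 (natDegree_eq_zero_iff_degree_le_zero.mpr h.le))
  by_cases him : z.im = 0
  · -- real root
    set r := z.re with hr_def
    have hzr : z = (r : ℂ) := Complex.ext rfl (by simp [him])
    have hroot : p.IsRoot r := by
      have h0 : aeval ((r : ℝ) : ℂ) p = 0 := by rw [← hzr]; exact hz
      erw [aeval_ofReal] at h0
      exact Complex.ofReal_eq_zero.mp h0
    obtain ⟨q, hq⟩ := dvd_iff_isRoot.mpr hroot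
    have hq0 : q ≠ 0 := by rintro rfl; rw [mul_zero] at hq; exact hp0 hq
    have hdq : p.natDegree = 1 + q.natDegree := by
      rw [hq, natDegree_mul (X_sub_C_ne_zero r) hq0, natDegree_X_sub_C]
    rcases le_or_gt r 0 with hr0 | hrpos
    · -- r ≤ 0
      have hIoc : ∀ t ∈ Set.Ioc (0 : ℝ) T, 0 ≤ q.eval t := by
        intro t ht
        have h1 : 0 < t - r := by linarith [ht.1]
        have h2 : 0 ≤ (t - r) * q.eval t := by
          have := hp t ⟨ht.1.le, ht.2⟩
          rw [hq] at this; simpa using this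
        exact nonneg_of_mul_nonneg_right h2 h1
      have hqnn : ∀ t ∈ Set.Icc (0 : ℝ) T, 0 ≤ q.eval t := by
        intro t ht
        exact eval_nonneg_of_closure q hIoc (by rw [closure_Ioc hT.ne]; exact ht)
      have hXr : InM T ((X : ℝ[X]) - C r) := by
        have h : (X : ℝ[X]) - C r = X + C (-r) := by rw [map_neg]; ring
        rw [h]
        exact (inM_X hT).add (sos_inM (sos_const (by linarith)))
      rw [hq]
      exact hXr.mul (ih (n - 1) (by omega) q (by omega) hqnn)
    · rcases le_or_gt T r with hrT | hrT
      · -- r ≥ T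
        have hq' : p = (C r - X) * (-q) := by rw [hq]; ring
        have hIco : ∀ t ∈ Set.Ico (0 : ℝ) T, 0 ≤ (-q).eval t := by
          intro t ht
          have h1 : 0 < r - t := by linarith [ht.2]
          have h2 : 0 ≤ (r - t) * (-q).eval t := by
            have := hp t ⟨ht.1, ht.2.le⟩
            rw [hq] at this; simp only [eval_mul, eval_sub, eval_X, eval_C] at this
            simp only [eval_neg]
            nlinarith
          exact nonneg_of_mul_nonneg_right h2 h1
        have hqnn : ∀ t ∈ Set.Icc (0 : ℝ) T, 0 ≤ (-q).eval t := by
          intro t ht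
          exact eval_nonneg_of_closure (-q) hIco (by rw [closure_Ico hT.ne]; exact ht)
        have hCr : InM T ((C r : ℝ[X]) - X) := by
          have h : (C r : ℝ[X]) - X = C (r - T) + (C T - X) := by rw [map_sub]; ring
          rw [h]
          exact (sos_inM (sos_const (by linarith))).add (inM_TsubX hT)
        rw [hq']
        refine hCr.mul (ih (n - 1) (by omega) (-q) ?_ hqnn)
        rw [natDegree_neg]; omega
      · -- 0 < r < T : interior root, double
        have hqr_pos : 0 ≤ q.eval r := by
          refine eval_nonneg_of_closure q (s := Set.Ioc r T) ?_ ?_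
          · intro t ht
            have h1 : 0 < t - r := by linarith [ht.1]
            have h2 : 0 ≤ (t - r) * q.eval t := by
              have := hp t ⟨by linarith [ht.1], ht.2⟩
              rw [hq] at this; simpa using this
            exact nonneg_of_mul_nonneg_right h2 h1
          · rw [closure_Ioc hrT.ne]; exact ⟨le_refl r, hrT.le⟩
        have hqr_neg : q.eval r ≤ 0 := by
          have : 0 ≤ (-q).eval r := by
            refine eval_nonneg_of_closure (-q) (s := Set.Ico 0 r) ?_ ?_
            · intro t ht
              have h1 : 0 < r - t := by linarith [ht.2]
              have h2 : 0 ≤ (r - t) * (-q).eval t := by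
                have := hp t ⟨ht.1, by linarith [ht.2]⟩
                rw [hq] at this; simp only [eval_mul, eval_sub, eval_X, eval_C] at this
                simp only [eval_neg]
                nlinarith
              exact nonneg_of_mul_nonneg_right h2 h1
            · rw [closure_Ico hrpos.ne]; exact ⟨hrpos.le, le_refl r⟩
          simpa using this
        have hqr : q.IsRoot r := le_antisymm hqr_neg hqr_pos
        obtain ⟨h, hh⟩ := dvd_iff_isRoot.mpr hqr
        have hp2 : p = (X - C r) ^ 2 * h := by rw [hq, hh]; ring
        have hh0 : h ≠ 0 := by rintro rfl; rw [mul_zero] at hp2; exact hp0 hp2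
        have hdh : p.natDegree = 2 + h.natDegree := by
          rw [hp2, natDegree_mul (pow_ne_zero 2 (X_sub_C_ne_zero r)) hh0,
            natDegree_pow, natDegree_X_sub_C]
        have hhnn : ∀ t ∈ Set.Icc (0 : ℝ) T, 0 ≤ h.eval t := by
          have haux : ∀ t, 0 ≤ p.eval t → t ≠ r → 0 ≤ h.eval t := by
            intro t hpt htr
            rw [hp2] at hpt
            simp only [eval_mul, eval_pow, eval_sub, eval_X, eval_C] at hpt
            have h1 : 0 < (t - r) ^ 2 := lt_of_le_of_ne (sq_nonneg _) (Ne.symm (pow_ne_zero 2 (sub_ne_zero.mpr htr)))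
            exact nonneg_of_mul_nonneg_right hpt h1
          intro t ht
          rcases le_or_gt t r with htr | htr
          · refine eval_nonneg_of_closure h (s := Set.Ico 0 r) ?_ ?_
            · intro u hu
              exact haux u (hp u ⟨hu.1, by linarith [hu.2]⟩) hu.2.ne
            · rw [closure_Ico hrpos.ne]; exact ⟨ht.1, htr⟩
          · refine eval_nonneg_of_closure h (s := Set.Ioc r T) ?_ ?_
            · intro u hu
              exact haux u (hp u ⟨by linarith [hu.1], hu.2⟩) hu.1.ne'
            · rw [closure_Ioc hrT.ne]; exact ⟨htr.le, ht.2⟩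
        rw [hp2]
        exact (sos_inM (sos_sq _)).mul (ih (n - 1) (by omega) h (by omega) hhnn)
  · -- complex quadratic factor
    obtain ⟨h, hh⟩ := p.quadratic_dvd_of_aeval_eq_zero_im_ne_zero hz him
    set d : ℝ[X] := X ^ 2 - C (2 * z.re) * X + C (‖z‖ ^ 2) with hd_def
    have hnorm : ‖z‖ ^ 2 = z.re ^ 2 + z.im ^ 2 := by
      rw [Complex.sq_norm, Complex.normSq_apply]; ring
    have hdsq : d = (X - C z.re) ^ 2 + C (z.im ^ 2) := by
      rw [hd_def, hnorm]
      simp only [map_add, map_pow, map_mul, map_ofNat]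
      ring
    have hd_eval : ∀ t, d.eval t = (t - z.re) ^ 2 + z.im ^ 2 := by
      intro t; rw [hdsq]; simp
    have hdpos : ∀ t, 0 < d.eval t := by
      intro t
      rw [hd_eval]
      have h1 : 0 < z.im ^ 2 := lt_of_le_of_ne (sq_nonneg _) (Ne.symm (pow_ne_zero 2 him))
      nlinarith [sq_nonneg (t - z.re)]
    have hd0 : d ≠ 0 := fun h0 => by simpa [h0] using hdpos 0
    have hh0 : h ≠ 0 := by rintro rfl; rw [mul_zero] at hh; exact hp0 hh
    have hdd : d.natDegree = 2 := by rw [hd_def]; compute_degree!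
    have hdh : p.natDegree = 2 + h.natDegree := by
      rw [hh, natDegree_mul hd0 hh0, hdd]
    have hhnn : ∀ t ∈ Set.Icc (0 : ℝ) T, 0 ≤ h.eval t := by
      intro t ht
      have := hp t ht
      rw [hh, eval_mul] at this
      exact nonneg_of_mul_nonneg_right this (hdpos t)
    have hdsos : IsSOS d := by
      rw [hdsq]
      exact sos_add (sos_sq _) (sos_const (sq_nonneg _))
    rw [hh]
    exact (sos_inM hdsos).mul (ih (n - 1) (by omega) h (by omega) hhnn)

end SOSAux

theorem interval_nonneg_iff_even_degree_certificate (p : Polynomial ℝ) (T : ℝ)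
    (hT : 0 < T) (hdeg : Even p.natDegree) :
    (∀ t ∈ Set.Icc (0 : ℝ) T, 0 ≤ p.eval t) ↔
      ∃ v w : Polynomial ℝ, IsSOS v ∧ IsSOS w ∧
        p = v + Polynomial.X * (Polynomial.C T - Polynomial.X) * w := by
  constructor
  · intro hp
    exact SOSAux.main T hT p.natDegree p le_rfl hp
  · rintro ⟨v, w, hv, hw, rfl⟩ t ht
    simp only [eval_add, eval_mul, eval_sub, eval_X, eval_C]
    have h1 := SOSAux.sos_eval_nonneg hv t
    have h2 := SOSAux.sos_eval_nonneg hw t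
    have h3 : 0 ≤ t := ht.1
    have h4 : 0 ≤ T - t := by linarith [ht.2]
    have h5 := mul_nonneg (mul_nonneg h3 h4) h2
    linarith
end

section
/- A univariate polynomial p(t) of odd degree is nonnegative on [0, T] (T > 0) if and only if p(t) = t·v(t) + (T − t)·w(t) for some sum-of-squares polynomials v and w. -/
open Polynomial

lemma isSOS_iff (p : ℝ[X]) : IsSOS p ↔ IsSumSq p := by
  constructor
  · rintro ⟨k, q, rfl⟩
    simpa only [sq] using IsSumSq.sum_mul_self Finset.univ q
  · intro h
    induction h with
    | zero => exact ⟨0, ![], by simp⟩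
    | sq_add a pS ih =>
      obtain ⟨k, q, rfl⟩ := ih
      exact ⟨k+1, Fin.cons a q, by rw [Fin.sum_univ_succ]; simp [sq]⟩

lemma sos_zero : IsSOS 0 := ⟨0, ![], by simp⟩
lemma sos_one : IsSOS 1 := ⟨1, ![1], by simp⟩
lemma sos_sq (p : ℝ[X]) : IsSOS (p ^ 2) := ⟨1, ![p], by simp⟩
lemma sos_add {p q : ℝ[X]} (hp : IsSOS p) (hq : IsSOS q) : IsSOS (p + q) := by
  rw [isSOS_iff] at *; exact hp.add hq

lemma sumsq_sq_mul {a y : ℝ[X]} (hy : IsSumSq y) : IsSumSq (a * a * y) := by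
  induction hy with
  | zero => simpa using IsSumSq.zero
  | sq_add b pS2 ih2 =>
    rw [mul_add]
    have h : a * a * (b * b) = (a * b) * (a * b) := by ring
    rw [h]
    exact IsSumSq.sq_add _ ih2

lemma sos_mul {p q : ℝ[X]} (hp : IsSOS p) (hq : IsSOS q) : IsSOS (p * q) := by
  rw [isSOS_iff] at *
  induction hp with
  | zero => simpa using IsSumSq.zero
  | sq_add a pS ih =>
    rw [add_mul]
    exact (sumsq_sq_mul hq).add ih

lemma sos_const {c : ℝ} (hc : 0 ≤ c) : IsSOS (C c) :=
  ⟨1, ![C (Real.sqrt c)], by simp [← map_pow, Real.sq_sqrt hc]⟩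

lemma sos_eval_nonneg {p : ℝ[X]} (hp : IsSOS p) (t : ℝ) : 0 ≤ p.eval t := by
  obtain ⟨k, q, rfl⟩ := hp
  rw [eval_finset_sum]
  exact Finset.sum_nonneg fun i _ => by rw [eval_pow]; positivity

def InM (T : ℝ) (p : ℝ[X]) : Prop :=
  ∃ a b c : ℝ[X], IsSOS a ∧ IsSOS b ∧ IsSOS c ∧ p = a + X * b + (C T - X) * c

lemma inM_sos {T : ℝ} {p : ℝ[X]} (hp : IsSOS p) : InM T p :=
  ⟨p, 0, 0, hp, sos_zero, sos_zero, by ring⟩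

lemma inM_X {T : ℝ} : InM T X := ⟨0, 1, 0, sos_zero, sos_one, sos_zero, by ring⟩

lemma inM_CTX {T : ℝ} : InM T (C T - X) := ⟨0, 0, 1, sos_zero, sos_zero, sos_one, by ring⟩

lemma cross {T : ℝ} (hT : 0 < T) :
    (X : ℝ[X]) * (C T - X) = X * (C T⁻¹ * (C T - X) ^ 2) + (C T - X) * (C T⁻¹ * X ^ 2) := by
  have h : (C T⁻¹ : ℝ[X]) * C T = 1 := by
    rw [← map_mul, inv_mul_cancel₀ hT.ne', map_one]
  linear_combination (-(X : ℝ[X]) * (C T - X)) * h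

lemma inM_mul {T : ℝ} (hT : 0 < T) {p q : ℝ[X]} (hp : InM T p) (hq : InM T q) :
    InM T (p * q) := by
  obtain ⟨a, b, c, sa, sb, sc, rfl⟩ := hp
  obtain ⟨a', b', c', sa', sb', sc', rfl⟩ := hq
  have expand : (a + X * b + (C T - X) * c) * (a' + X * b' + (C T - X) * c')
      = (a * a' + X ^ 2 * (b * b') + (C T - X) ^ 2 * (c * c'))
        + X * (a * b' + a' * b) + (C T - X) * (a * c' + a' * c)
        + X * (C T - X) * (b * c' + c * b') := by ring
  rw [expand, cross hT]
  refine ⟨a * a' + X ^ 2 * (b * b') + (C T - X) ^ 2 * (c * c'),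
    (a * b' + a' * b) + C T⁻¹ * (C T - X) ^ 2 * (b * c' + c * b'),
    (a * c' + a' * c) + C T⁻¹ * X ^ 2 * (b * c' + c * b'), ?_, ?_, ?_, by ring⟩
  · exact sos_add (sos_add (sos_mul sa sa') (sos_mul (sos_sq X) (sos_mul sb sb')))
      (sos_mul (sos_sq _) (sos_mul sc sc'))
  · exact sos_add (sos_add (sos_mul sa sb') (sos_mul sa' sb))
      (sos_mul (sos_mul (sos_const (by positivity)) (sos_sq _))
        (sos_add (sos_mul sb sc') (sos_mul sc sb')))
  · exact sos_add (sos_add (sos_mul sa sc') (sos_mul sa' sc))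
      (sos_mul (sos_mul (sos_const (by positivity)) (sos_sq _))
        (sos_add (sos_mul sb sc') (sos_mul sc sb')))

lemma eval_nonneg_right {q : ℝ[X]} {r b : ℝ} (hrb : r < b)
    (h : ∀ t ∈ Set.Ioo r b, 0 ≤ q.eval t) : 0 ≤ q.eval r := by
  have hne : (nhdsWithin r (Set.Ioo r b)).NeBot := by
    apply mem_closure_iff_nhdsWithin_neBot.mp
    rw [closure_Ioo hrb.ne]
    exact ⟨le_rfl, hrb.le⟩
  have ht : Filter.Tendsto (fun t => q.eval t) (nhdsWithin r (Set.Ioo r b))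
      (nhds (q.eval r)) := (q.continuous.tendsto r).mono_left nhdsWithin_le_nhds
  exact ge_of_tendsto ht (eventually_mem_nhdsWithin.mono h)

lemma eval_nonneg_left {q : ℝ[X]} {a r : ℝ} (har : a < r)
    (h : ∀ t ∈ Set.Ioo a r, 0 ≤ q.eval t) : 0 ≤ q.eval r := by
  have hne : (nhdsWithin r (Set.Ioo a r)).NeBot := by
    apply mem_closure_iff_nhdsWithin_neBot.mp
    rw [closure_Ioo har.ne]
    exact ⟨har.le, le_rfl⟩
  have ht : Filter.Tendsto (fun t => q.eval t) (nhdsWithin r (Set.Ioo a r))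
      (nhds (q.eval r)) := (q.continuous.tendsto r).mono_left nhdsWithin_le_nhds
  exact ge_of_tendsto ht (eventually_mem_nhdsWithin.mono h)

lemma sos_of_noroot : ∀ n (p : ℝ[X]), p.natDegree ≤ n → (∀ x : ℝ, p.eval x ≠ 0) →
    0 < p.eval 0 → IsSOS p := by
  intro n
  induction n using Nat.strong_induction_on with
  | _ n ih =>
  intro p hdeg hnr hpos0
  by_cases hc : p.natDegree = 0
  · have hp : p = C (p.coeff 0) := p.eq_C_of_natDegree_eq_zero hc
    rw [hp]
    refine sos_const ?_
    have := hpos0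
    rw [hp] at this
    simpa using this.le
  · obtain ⟨z, hz⟩ : ∃ z : ℂ, aeval z p = 0 := by
      refine IsAlgClosed.exists_aeval_eq_zero _ p ?_
      intro h
      exact hc (natDegree_eq_zero_iff_degree_le_zero.mpr h.le)
    have hzim : z.im ≠ 0 := by
      intro hz0
      lift z to ℝ using hz0
      erw [aeval_ofReal, RCLike.ofReal_eq_zero] at hz
      exact hnr z hz
    obtain ⟨s, hs⟩ := p.quadratic_dvd_of_aeval_eq_zero_im_ne_zero hz hzim
    set d : ℝ[X] := X ^ 2 - C (2 * z.re) * X + C (‖z‖ ^ 2) with hd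
    have hnorm : ‖z‖ ^ 2 = z.re ^ 2 + z.im ^ 2 := by
      rw [Complex.sq_norm, Complex.normSq_apply]; ring
    have hdeq : d = (X - C z.re) ^ 2 + (C z.im) ^ 2 := by
      rw [hd, hnorm]
      simp only [map_add, map_mul, map_pow, map_ofNat]
      ring
    have hdsos : IsSOS d := by rw [hdeq]; exact sos_add (sos_sq _) (sos_sq _)
    have hdpos : ∀ x : ℝ, 0 < d.eval x := by
      intro x
      rw [hdeq]
      simp only [eval_add, eval_pow, eval_sub, eval_X, eval_C]
      have : z.im ^ 2 > 0 := by positivity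
      nlinarith [sq_nonneg (x - z.re)]
    have hsnr : ∀ x : ℝ, s.eval x ≠ 0 := by
      intro x hx
      apply hnr x
      rw [hs, eval_mul, hx, mul_zero]
    have hspos0 : 0 < s.eval 0 := by
      rw [hs, eval_mul] at hpos0
      nlinarith [hdpos 0]
    have hs0 : s ≠ 0 := by
      intro h
      rw [h] at hspos0
      simp at hspos0
    have hp0 : p ≠ 0 := by
      intro h
      rw [h] at hpos0
      simp at hpos0
    have hd0 : d ≠ 0 := fun h => (hdpos 0).ne' (by rw [h]; simp)
    have hdd : d.natDegree = 2 := by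
      rw [hd]
      compute_degree!
    have hdegs : s.natDegree < n := by
      have : p.natDegree = d.natDegree + s.natDegree := by
        rw [hs, natDegree_mul hd0 hs0]
      omega
    have hssos : IsSOS s := ih s.natDegree hdegs s le_rfl hsnr hspos0
    rw [hs]
    exact sos_mul hdsos hssos

lemma main_inM (T : ℝ) (hT : 0 < T) : ∀ n (p : ℝ[X]), p.natDegree ≤ n →
    (∀ t ∈ Set.Icc (0 : ℝ) T, 0 ≤ p.eval t) → InM T p := by
  intro n
  induction n using Nat.strong_induction_on with
  | _ n ih =>
  intro p hdeg hpos
  by_cases hc : p.natDegree = 0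
  · have hp : p = C (p.coeff 0) := p.eq_C_of_natDegree_eq_zero hc
    have h0 := hpos 0 ⟨le_rfl, hT.le⟩
    rw [hp] at h0 ⊢
    simp only [eval_C] at h0
    exact inM_sos (sos_const h0)
  by_cases hroot : ∃ r : ℝ, p.IsRoot r
  · obtain ⟨r, hr⟩ := hroot
    obtain ⟨q, hpq⟩ : ∃ q, p = (X - C r) * q := dvd_iff_isRoot.mpr hr
    have hp0 : p ≠ 0 := fun h => hc (by rw [h]; simp)
    have hq0 : q ≠ 0 := by rintro rfl; rw [mul_zero] at hpq; exact hp0 hpq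
    have hdq : q.natDegree < n := by
      have : p.natDegree = 1 + q.natDegree := by
        rw [hpq, natDegree_mul (X_sub_C_ne_zero r) hq0, natDegree_X_sub_C]
      omega
    have hev : ∀ t, p.eval t = (t - r) * q.eval t := by
      intro t; rw [hpq]; simp
    rcases lt_trichotomy r 0 with h1 | h1 | h1
    · -- r < 0
      have hqpos : ∀ t ∈ Set.Icc (0 : ℝ) T, 0 ≤ q.eval t := by
        intro t ht
        have h2 := hpos t ht
        rw [hev t] at h2
        have h3 : 0 < t - r := by linarith [ht.1]
        by_contra hneg
        push_neg at hneg
        nlinarith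
      have hXr : InM T (X - C r) :=
        ⟨C (-r), 1, 0, sos_const (by linarith), sos_one, sos_zero, by rw [map_neg]; ring⟩
      rw [hpq]
      exact inM_mul hT hXr (ih q.natDegree hdq q le_rfl hqpos)
    · -- r = 0
      subst h1
      rw [map_zero, sub_zero] at hpq
      have hq1 : ∀ t, 0 < t → t ≤ T → 0 ≤ q.eval t := by
        intro t ht0 htT
        have h2 := hpos t ⟨ht0.le, htT⟩
        rw [hev t, sub_zero] at h2
        by_contra hneg
        push_neg at hneg
        nlinarith
      have hqpos : ∀ t ∈ Set.Icc (0 : ℝ) T, 0 ≤ q.eval t := by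
        intro t ht
        rcases eq_or_lt_of_le ht.1 with h | h
        · rw [← h]
          exact eval_nonneg_right hT fun s hs => hq1 s hs.1 hs.2.le
        · exact hq1 t h ht.2
      rw [hpq]
      exact inM_mul hT inM_X (ih q.natDegree hdq q le_rfl hqpos)
    rcases lt_trichotomy r T with h2 | h2 | h2
    · -- 0 < r < T : double root
      have hqR : ∀ t ∈ Set.Ioo r T, 0 ≤ q.eval t := by
        intro t ht
        have h3 := hpos t ⟨by linarith [ht.1], ht.2.le⟩
        rw [hev t] at h3
        have : 0 < t - r := by linarith [ht.1]
        by_contra hneg; push_neg at hneg; nlinarith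
      have hqL : ∀ t ∈ Set.Ioo (0 : ℝ) r, 0 ≤ (-q).eval t := by
        intro t ht
        have h3 := hpos t ⟨ht.1.le, by linarith [ht.2]⟩
        rw [hev t] at h3
        have : t - r < 0 := by linarith [ht.2]
        rw [eval_neg]
        by_contra hneg; push_neg at hneg; nlinarith
      have hqr0 : q.eval r = 0 := by
        have ha := eval_nonneg_right h2 hqR
        have hb := eval_nonneg_left h1 hqL
        rw [eval_neg] at hb
        linarith
      obtain ⟨s, hqs⟩ : ∃ s, q = (X - C r) * s := dvd_iff_isRoot.mpr hqr0
      have hps : p = (X - C r) ^ 2 * s := by rw [hpq, hqs]; ring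
      have hs0 : s ≠ 0 := by
        rintro rfl
        rw [mul_zero] at hps
        exact hp0 hps
      have hevs : ∀ t, p.eval t = (t - r) ^ 2 * s.eval t := by
        intro t; rw [hps]; simp
      have hsIoo : ∀ t ∈ Set.Ioo r T, 0 ≤ s.eval t := by
        intro t ht
        have h3 := hpos t ⟨by linarith [ht.1], ht.2.le⟩
        rw [hevs t] at h3
        have : 0 < (t - r) ^ 2 := by nlinarith [ht.1]
        by_contra hneg; push_neg at hneg; nlinarith
      have hspos : ∀ t ∈ Set.Icc (0 : ℝ) T, 0 ≤ s.eval t := by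
        intro t ht
        by_cases htr : t = r
        · rw [htr]
          exact eval_nonneg_right h2 hsIoo
        · have h3 := hpos t ht
          rw [hevs t] at h3
          have : 0 < (t - r) ^ 2 := by
            have : t - r ≠ 0 := sub_ne_zero.mpr htr
            positivity
          by_contra hneg; push_neg at hneg; nlinarith
      have hds : s.natDegree < n := by
        have h4 : p.natDegree = 2 + s.natDegree := by
          rw [hps, natDegree_mul (pow_ne_zero 2 (X_sub_C_ne_zero r)) hs0,
            natDegree_pow, natDegree_X_sub_C]
        omega
      rw [hps]
      exact inM_mul hT (inM_sos (sos_sq _)) (ih s.natDegree hds s le_rfl hspos)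
    · -- r = T
      subst h2
      have hpq' : p = (C r - X) * (-q) := by rw [hpq]; ring
      have hq1 : ∀ t, 0 ≤ t → t < r → 0 ≤ (-q).eval t := by
        intro t ht0 htT
        have h3 := hpos t ⟨ht0, htT.le⟩
        rw [hev t] at h3
        have : t - r < 0 := by linarith
        rw [eval_neg]
        by_contra hneg; push_neg at hneg; nlinarith
      have hqpos : ∀ t ∈ Set.Icc (0 : ℝ) r, 0 ≤ (-q).eval t := by
        intro t ht
        rcases eq_or_lt_of_le ht.2 with h | h
        · rw [h]
          exact eval_nonneg_left hT fun s hs => hq1 s hs.1.le hs.2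
        · exact hq1 t ht.1 h
      have hdq' : (-q).natDegree < n := by rwa [natDegree_neg]
      rw [hpq']
      exact inM_mul hT inM_CTX (ih (-q).natDegree hdq' (-q) le_rfl hqpos)
    · -- T < r
      have hpq' : p = (C r - X) * (-q) := by rw [hpq]; ring
      have hCrX : InM T (C r - X) :=
        ⟨C (r - T), 0, 1, sos_const (by linarith), sos_zero, sos_one, by rw [map_sub]; ring⟩
      have hqpos : ∀ t ∈ Set.Icc (0 : ℝ) T, 0 ≤ (-q).eval t := by
        intro t ht
        have h3 := hpos t ht
        rw [hev t] at h3
        have : t - r < 0 := by linarith [ht.2]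
        rw [eval_neg]
        by_contra hneg; push_neg at hneg; nlinarith
      have hdq' : (-q).natDegree < n := by rwa [natDegree_neg]
      rw [hpq']
      exact inM_mul hT hCrX (ih (-q).natDegree hdq' (-q) le_rfl hqpos)
  · -- no real root
    push_neg at hroot
    have hnr : ∀ x : ℝ, p.eval x ≠ 0 := fun x => hroot x
    have hpos0 : 0 < p.eval 0 :=
      lt_of_le_of_ne (hpos 0 ⟨le_rfl, hT.le⟩) (Ne.symm (hnr 0))
    exact inM_sos (sos_of_noroot p.natDegree p le_rfl hnr hpos0)


theorem interval_nonneg_iff_odd_degree_certificate (p : Polynomial ℝ) (T : ℝ)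
    (hT : 0 < T) (hdeg : Odd p.natDegree) :
    (∀ t ∈ Set.Icc (0 : ℝ) T, 0 ≤ p.eval t) ↔
      ∃ v w : Polynomial ℝ, IsSOS v ∧ IsSOS w ∧
        p = Polynomial.X * v + (Polynomial.C T - Polynomial.X) * w := by
  constructor
  · intro hpos
    obtain ⟨a, b, c, sa, sb, sc, heq⟩ := main_inM T hT p.natDegree p le_rfl hpos
    refine ⟨b + C T⁻¹ * a, c + C T⁻¹ * a, sos_add sb (sos_mul (sos_const (by positivity)) sa),
      sos_add sc (sos_mul (sos_const (by positivity)) sa), ?_⟩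
    have h1 : (C T : ℝ[X]) * C T⁻¹ = 1 := by
      rw [← map_mul, mul_inv_cancel₀ hT.ne', map_one]
    rw [heq]
    linear_combination (-a) * h1
  · rintro ⟨v, w, sv, sw, rfl⟩ t ⟨ht0, htT⟩
    simp only [eval_add, eval_mul, eval_X, eval_sub, eval_C]
    have h1 := sos_eval_nonneg sv t
    have h2 := sos_eval_nonneg sw t
    nlinarith
end

section
/- Let f : ℝⁿ → ℝⁿ be C¹ with sym[Jf(x)] ⪯ −(τ/2)·I for all x, τ > 0. Then f has at most one equilibrium point (point x* with f(x*) = 0), and if an equilibrium x* exists, every solution of ẋ = f(x) converges to x* exponentially: ‖x(t) − x*‖ ≤ e^{−τt/2}‖x(0) − x*‖. -/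
open Matrix

private lemma aux_psd_quad (n : ℕ) (τ : ℝ) (A : Matrix (Fin n) (Fin n) ℝ) (v : Fin n → ℝ)
    (hps : 0 ≤ dotProduct (star v) ((((-(τ / 2)) • (1 : Matrix (Fin n) (Fin n) ℝ) -
        (1 / 2 : ℝ) • (A + Aᵀ))) *ᵥ v)) :
    ∑ i, (∑ j, A i j * v j) * v i ≤ -(τ/2) * ∑ i, v i * v i := by
  simp only [star_trivial, dotProduct, Matrix.mulVec, dotProduct, Matrix.sub_apply,
    Matrix.smul_apply, Matrix.add_apply, Matrix.one_apply, Matrix.transpose_apply,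
    smul_eq_mul, mul_ite, mul_one, mul_zero, sub_mul, ite_mul, zero_mul, add_mul,
    Finset.sum_sub_distrib, Finset.sum_add_distrib, Finset.sum_ite_eq, Finset.mem_univ,
    if_true, Finset.mul_sum] at hps
  have e : ∑ x, v x * (-(τ / 2) * v x - ∑ y, 1 / 2 * (A x y + A y x) * v y)
      = -(τ/2) * (∑ i, v i * v i)
        - ((1/2) * (∑ x, ∑ y, A x y * v y * v x) + (1/2) * (∑ x, ∑ y, A y x * v y * v x)) := by
    have e1 : ∀ x ∈ Finset.univ, v x * (-(τ / 2) * v x - ∑ y, 1 / 2 * (A x y + A y x) * v y)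
        = -(τ/2) * (v x * v x) - ∑ y, ((1/2) * (A x y * v y * v x) + (1/2) * (A y x * v y * v x)) := by
      intro x _
      rw [mul_sub, Finset.mul_sum]
      congr 1
      · ring
      · exact Finset.sum_congr rfl fun y _ => by ring
    rw [Finset.sum_congr rfl e1, Finset.sum_sub_distrib]
    congr 1
    · rw [Finset.mul_sum]
    · simp only [Finset.sum_add_distrib, Finset.mul_sum]
  have hq : ∑ x, ∑ y, A y x * v y * v x = ∑ x, ∑ y, A x y * v y * v x := by
    rw [Finset.sum_comm]
    exact Finset.sum_congr rfl fun i _ => Finset.sum_congr rfl fun j _ => by ring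
  rw [e, hq] at hps
  have goal_eq : ∑ i, (∑ j, A i j * v j) * v i = ∑ x, ∑ y, A x y * v y * v x :=
    Finset.sum_congr rfl fun i _ => by rw [Finset.sum_mul]
  rw [goal_eq]
  linarith

theorem contraction_unique_equilibrium_and_convergence (n : ℕ)
    (f : EuclideanSpace ℝ (Fin n) → EuclideanSpace ℝ (Fin n))
    (hf : ContDiff ℝ 1 f)
    (τ : ℝ) (hτ : 0 < τ)
    (J : EuclideanSpace ℝ (Fin n) → Matrix (Fin n) (Fin n) ℝ)
    (hJ : ∀ z i j, J z i j = fderiv ℝ f z (EuclideanSpace.single j 1) i)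
    (hcontr : ∀ z : EuclideanSpace ℝ (Fin n),
      ((-(τ / 2)) • (1 : Matrix (Fin n) (Fin n) ℝ) -
        (1 / 2 : ℝ) • (J z + (J z)ᵀ)).PosSemidef) :
    (∀ a b : EuclideanSpace ℝ (Fin n), f a = 0 → f b = 0 → a = b) ∧
    (∀ xstar : EuclideanSpace ℝ (Fin n), f xstar = 0 →
      ∀ x : ℝ → EuclideanSpace ℝ (Fin n),
        (∀ t, HasDerivAt x (f (x t)) t) →
        ∀ t, 0 ≤ t →
          ‖x t - xstar‖ ≤ Real.exp (-τ * t / 2) * ‖x 0 - xstar‖) := by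
  have hdiff : Differentiable ℝ f := hf.differentiable one_ne_zero
  -- Step A: quadratic bound on the Jacobian quadratic form
  have hquad : ∀ z (v : EuclideanSpace ℝ (Fin n)),
      (inner ℝ (fderiv ℝ f z v) v : ℝ) ≤ -(τ/2) * ‖v‖^2 := by
    intro z v
    have hv : v = ∑ j, v j • EuclideanSpace.single j (1:ℝ) := by
      have := (EuclideanSpace.basisFun (Fin n) ℝ).sum_repr v
      simp only [EuclideanSpace.basisFun_apply, EuclideanSpace.basisFun_repr] at this
      exact this.symm
    have hfd : ∀ i, fderiv ℝ f z v i = ∑ j, J z i j * v j := by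
      intro i
      conv_lhs => rw [hv]
      rw [map_sum, WithLp.ofLp_sum, Finset.sum_apply]
      refine Finset.sum_congr rfl fun j _ => ?_
      rw [(fderiv ℝ f z).map_smul]
      simp only [PiLp.smul_apply, smul_eq_mul, hJ]
      ring
    have hps := (hcontr z).dotProduct_mulVec_nonneg (fun i => v i)
    have key := aux_psd_quad n τ (J z) (fun i => v i) hps
    have hinner : (inner ℝ (fderiv ℝ f z v) v : ℝ) = ∑ i, (∑ j, J z i j * v j) * v i := by
      simp only [PiLp.inner_apply, RCLike.inner_apply, starRingEnd_apply, star_trivial]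
      exact Finset.sum_congr rfl fun i _ => by rw [hfd i, mul_comm]
    have hnorm : ‖v‖^2 = ∑ i, v i * v i := by
      rw [← real_inner_self_eq_norm_sq]
      simp only [PiLp.inner_apply, RCLike.inner_apply, starRingEnd_apply, star_trivial]
    rw [hinner, hnorm]
    exact key
  -- Step B: strong monotonicity
  have hmono : ∀ a b : EuclideanSpace ℝ (Fin n),
      (inner ℝ (f a - f b) (a - b) : ℝ) ≤ -(τ/2) * ‖a - b‖^2 := by
    intro a b
    set v := a - b with hvdef
    set C : ℝ := -(τ/2) * ‖v‖^2 with hC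
    have hψ : ∀ s : ℝ, HasDerivAt (fun s : ℝ => (inner ℝ (f (b + s • v)) v : ℝ))
        (inner ℝ (fderiv ℝ f (b + s • v) v) v : ℝ) s := by
      intro s
      have h1 : HasDerivAt (fun s : ℝ => b + s • v) v s := by
        simpa using ((hasDerivAt_id s).smul_const v).const_add b
      have h2 := ((hdiff (b + s • v)).hasFDerivAt).comp_hasDerivAt s h1
      have h3 := h2.inner ℝ (hasDerivAt_const s v)
      simpa using h3
    have hχ : ∀ s : ℝ, HasDerivAt (fun s : ℝ => (inner ℝ (f (b + s • v)) v : ℝ) - C * s)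
        ((inner ℝ (fderiv ℝ f (b + s • v) v) v : ℝ) - C) s := by
      intro s
      have hlin : HasDerivAt (fun s : ℝ => C * s) C s := by
        simpa using (hasDerivAt_id s).const_mul C
      exact (hψ s).sub hlin
    have hanti : Antitone (fun s : ℝ => (inner ℝ (f (b + s • v)) v : ℝ) - C * s) := by
      apply antitone_of_deriv_nonpos
      · exact fun s => (hχ s).differentiableAt
      · intro s
        rw [(hχ s).deriv]
        have := hquad (b + s • v) v
        rw [hC]
        linarith
    have h01 := hanti (by norm_num : (0:ℝ) ≤ 1)
    simp only [zero_smul, add_zero, one_smul, mul_one, mul_zero, sub_zero] at h01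
    have hba : b + v = a := by rw [hvdef]; abel
    rw [hba] at h01
    rw [inner_sub_left]
    linarith
  constructor
  · intro a b ha hb
    have := hmono a b
    rw [ha, hb, sub_zero, inner_zero_left] at this
    have h2 : ‖a - b‖ ^ 2 ≤ 0 := by nlinarith [sq_nonneg ‖a - b‖]
    have h3 : ‖a - b‖ = 0 :=
      le_antisymm (by nlinarith [norm_nonneg (a - b)]) (norm_nonneg _)
    rw [norm_eq_zero, sub_eq_zero] at h3
    exact h3
  · intro xstar hstar x hx t ht
    set g : ℝ → ℝ := fun t => Real.exp (τ * t) * (inner ℝ (x t - xstar) (x t - xstar) : ℝ) with hg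
    have hgd : ∀ t, HasDerivAt g
        (τ * Real.exp (τ * t) * (inner ℝ (x t - xstar) (x t - xstar) : ℝ)
          + Real.exp (τ * t) * (2 * (inner ℝ (f (x t)) (x t - xstar) : ℝ))) t := by
      intro t
      have hu : HasDerivAt (fun t => x t - xstar) (f (x t)) t := (hx t).sub_const xstar
      have hinner := hu.inner ℝ hu
      have hexp : HasDerivAt (fun t => Real.exp (τ * t)) (τ * Real.exp (τ * t)) t := by
        simpa [mul_comm] using (((hasDerivAt_id t).const_mul τ).exp)
      have hmul := hexp.mul hinner
      refine HasDerivAt.congr_deriv hmul ?_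
      rw [real_inner_comm (f (x t)) (x t - xstar)]
      ring
    have hganti : Antitone g := by
      apply antitone_of_deriv_nonpos
      · exact fun s => (hgd s).differentiableAt
      · intro s
        rw [(hgd s).deriv]
        have h1 : (inner ℝ (f (x s)) (x s - xstar) : ℝ) ≤ -(τ/2) * ‖x s - xstar‖^2 := by
          have := hmono (x s) xstar
          rwa [hstar, sub_zero] at this
        have h2 : (inner ℝ (x s - xstar) (x s - xstar) : ℝ) = ‖x s - xstar‖^2 :=
          real_inner_self_eq_norm_sq _
        have h3 : (0:ℝ) < Real.exp (τ * s) := Real.exp_pos _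
        rw [h2]
        nlinarith [sq_nonneg ‖x s - xstar‖]
    have hgle := hganti ht
    rw [hg] at hgle
    simp only [mul_zero, Real.exp_zero, one_mul] at hgle
    have h2 : ∀ y : EuclideanSpace ℝ (Fin n), (inner ℝ y y : ℝ) = ‖y‖^2 :=
      fun y => real_inner_self_eq_norm_sq y
    rw [h2, h2] at hgle
    -- now: exp (τ*t) * ‖x t - xstar‖^2 ≤ ‖x 0 - xstar‖^2
    have hE : Real.exp (-τ * t / 2) * Real.exp (-τ * t / 2) = Real.exp (-(τ * t)) := by
      rw [← Real.exp_add]; ring_nf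
    have hEinv : Real.exp (-(τ * t)) * Real.exp (τ * t) = 1 := by
      rw [← Real.exp_add]; simp
    have hexppos : (0:ℝ) < Real.exp (τ * t) := Real.exp_pos _
    have hsq : ‖x t - xstar‖^2 ≤ (Real.exp (-τ * t / 2) * ‖x 0 - xstar‖)^2 := by
      have : ‖x t - xstar‖^2 ≤ Real.exp (-(τ * t)) * ‖x 0 - xstar‖^2 := by
        have h4 : Real.exp (-(τ*t)) * (Real.exp (τ*t) * ‖x t - xstar‖^2)
            ≤ Real.exp (-(τ*t)) * ‖x 0 - xstar‖^2 :=
          mul_le_mul_of_nonneg_left hgle (le_of_lt (Real.exp_pos _))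
        calc ‖x t - xstar‖^2 = Real.exp (-(τ*t)) * (Real.exp (τ*t) * ‖x t - xstar‖^2) := by
              rw [← mul_assoc, hEinv, one_mul]
          _ ≤ _ := h4
      calc ‖x t - xstar‖^2 ≤ Real.exp (-(τ * t)) * ‖x 0 - xstar‖^2 := this
        _ = (Real.exp (-τ * t / 2) * ‖x 0 - xstar‖)^2 := by
            rw [mul_pow, ← hE]; ring
    have hpos1 : (0:ℝ) ≤ ‖x t - xstar‖ := norm_nonneg _
    have hpos2 : (0:ℝ) ≤ Real.exp (-τ * t / 2) * ‖x 0 - xstar‖ :=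
      mul_nonneg (le_of_lt (Real.exp_pos _)) (norm_nonneg _)
    nlinarith [hsq, hpos1, hpos2]
end
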